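/- Let A be an index type and a : (A →₀ ℕ) → ℝ a positive function with a_0 = 1. Suppose there exist e ∈ ℕ and a function A' : ℕ → ℝ with A'(k) > 0 for all k, such that for all p, q ∈ ℕ with p ≥ q + e and all f, g : (A →₀ ℕ) → ℂ with ‖f‖_q < ∞ and ‖g‖_p < ∞ one has ‖f*g‖_p ≤ A'(p−q) · ‖f‖_q · ‖g‖_p. Then a is superexponential, i.e. a_α · a_β ≤ a_{α+β} for all α, β ∈ A →₀ ℕ. -/

import Mathlib

open scoped ENNReal

/-- The convolution (Cauchy product) of two families indexed by the free commutative
monoid `A →₀ ℕ`, i.e. multiplication in `MvPowerSeries A ℂ`. -/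
noncomputable def conv {A : Type*} [DecidableEq A] (f g : (A →₀ ℕ) → ℂ) : (A →₀ ℕ) → ℂ :=
  fun γ => ∑ x ∈ Finset.HasAntidiagonal.antidiagonal γ, f x.1 * g x.2

/-- The squared weighted `ℓ²`-norm `‖f‖_p² = ∑' α, |f α|² a α ^ (-p)`, as a sum in `[0,∞]`. -/
noncomputable def wsum {A : Type*} (a : (A →₀ ℕ) → ℝ) (p : ℕ) (f : (A →₀ ℕ) → ℂ) : ℝ≥0∞ :=
  ∑' α, ENNReal.ofReal (‖f α‖ ^ 2 / (a α) ^ p)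

/-- The weighted `ℓ²`-norm `‖f‖_p`, with values in `[0,∞]`. -/
noncomputable def wnorm {A : Type*} (a : (A →₀ ℕ) → ℝ) (p : ℕ) (f : (A →₀ ℕ) → ℂ) : ℝ≥0∞ :=
  (wsum a p f) ^ (2⁻¹ : ℝ)

/-! Testing the inequality with `q`, `p = q + e` on the unit masses at `α` and `β`, whose
convolution is the unit mass at `α + β`, gives
`(a α * a β / a (α + β)) ^ q ≤ A' e ^ 2 * (a (α + β) / a β) ^ e` for every `q`;
a ratio whose powers stay bounded is at most `1`. -/

theorem le_one_of_forall_pow_le {r C : ℝ} (h : ∀ n : ℕ, r ^ n ≤ C) : r ≤ 1 := by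
  by_contra! hr
  obtain ⟨n, hn⟩ := pow_unbounded_of_one_lt C hr
  exact (h n).not_gt hn

theorem mul_le_of_forall_inv_pow_le {x y z C : ℝ} (hx : 0 < x) (hy : 0 < y) (hz : 0 < z) (e : ℕ)
    (h : ∀ q : ℕ, (z ^ (q + e))⁻¹ ≤ C * (x ^ q)⁻¹ * (y ^ (q + e))⁻¹) : x * y ≤ z := by
  rw [← div_le_one hz]
  refine le_one_of_forall_pow_le (C := C * (z / y) ^ e) fun q => ?_
  have hq : x ^ q * y ^ (q + e) ≤ C * z ^ (q + e) := by
    have := h q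
    field_simp at this
    linarith
  rw [div_pow, div_pow, div_le_iff₀ (by positivity), mul_div_assoc', div_mul_eq_mul_div,
    le_div_iff₀ (by positivity)]
  calc (x * y) ^ q * y ^ e = x ^ q * y ^ (q + e) := by ring
    _ ≤ C * z ^ (q + e) := hq
    _ = C * z ^ e * z ^ q := by ring

theorem wnorm_sq {A : Type*} (a : (A →₀ ℕ) → ℝ) (p : ℕ) (f : (A →₀ ℕ) → ℂ) :
    wnorm a p f ^ 2 = wsum a p f := by
  rw [wnorm, ← ENNReal.rpow_natCast, ← ENNReal.rpow_mul]
  norm_num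

theorem wsum_single {A : Type*} [DecidableEq A] (a : (A →₀ ℕ) → ℝ) (p : ℕ) (μ : A →₀ ℕ) (c : ℂ) :
    wsum a p (Pi.single μ c) = ENNReal.ofReal (‖c‖ ^ 2 / a μ ^ p) := by
  rw [wsum, tsum_eq_single μ fun ν hν => by simp [hν]]
  simp

theorem conv_single_single {A : Type*} [DecidableEq A] (μ ν : A →₀ ℕ) (c d : ℂ) :
    conv (Pi.single μ c) (Pi.single ν d) = Pi.single (μ + ν) (c * d) := by
  ext γ
  simp only [conv, Pi.single_apply, mul_ite, ite_mul, mul_zero, zero_mul, ← ite_and]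
  have hpair (x : (A →₀ ℕ) × (A →₀ ℕ)) : (x.2 = ν ∧ x.1 = μ) ↔ x = (μ, ν) := by
    rw [and_comm, Prod.ext_iff]
  simp_rw [hpair]
  rw [Finset.sum_ite_eq']
  simp [eq_comm]

theorem superexponential_of_vage_inequality_general {A : Type*} [DecidableEq A]
    (a : (A →₀ ℕ) → ℝ)
    (hpos : ∀ α, 0 < a α)
    (e : ℕ) (A' : ℕ → ℝ)
    (hineq : ∀ p q : ℕ, q + e ≤ p → ∀ f g : (A →₀ ℕ) → ℂ,
      wsum a q f < ⊤ → wsum a p g < ⊤ →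
      wnorm a p (conv f g) ≤ ENNReal.ofReal (A' (p - q)) * wnorm a q f * wnorm a p g) :
    ∀ α β : A →₀ ℕ, a α * a β ≤ a (α + β) := by
  intro α β
  refine mul_le_of_forall_inv_pow_le (hpos α) (hpos β) (hpos _) e
    (C := (ENNReal.ofReal (A' e) ^ 2).toReal) fun q => ?_
  have hunit := hineq (q + e) q le_rfl (Pi.single α 1) (Pi.single β 1)
    (by simp [wsum_single]) (by simp [wsum_single])
  rw [conv_single_single, add_tsub_cancel_left] at hunit
  have hsq := pow_le_pow_left₀ (by positivity) hunit 2
  simp only [mul_pow, wnorm_sq, wsum_single, mul_one, norm_one, one_pow, one_div] at hsq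
  have := ENNReal.toReal_mono (by finiteness) hsq
  simpa [ENNReal.toReal_mul, ENNReal.toReal_ofReal, (hpos _).le] using this

/-- If a positive function `a` with `a 0 = 1` admits a Våge-type inequality
`‖f * g‖_p ≤ A' (p - q) ⬝ ‖f‖_q ⬝ ‖g‖_p` for all `p ≥ q + e`, then `a` is
superexponential. -/
theorem superexponential_of_vage_inequality {A : Type*} [DecidableEq A]
    (a : (A →₀ ℕ) → ℝ)
    (hpos : ∀ α, 0 < a α) (h0 : a 0 = 1)
    (e : ℕ) (A' : ℕ → ℝ) (hA' : ∀ k, 0 < A' k)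
    (hineq : ∀ p q : ℕ, q + e ≤ p → ∀ f g : (A →₀ ℕ) → ℂ,
      wsum a q f < ⊤ → wsum a p g < ⊤ →
      wnorm a p (conv f g) ≤ ENNReal.ofReal (A' (p - q)) * wnorm a q f * wnorm a p g) :
    ∀ α β : A →₀ ℕ, a α * a β ≤ a (α + β) :=
  superexponential_of_vage_inequality_general a hpos e A' hineq
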